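/- arXiv:2206.14610 — 3 statements merged into one kernel-verified Lean document; each statement's English description precedes it below -/
import Mathlib

section
/- Let d ≥ 1 be an integer, μ > 0 and λ ∈ ℝ with 2μ + dλ > 0, and write ‖τ‖_𝒞 = ⟨𝒞τ, τ⟩^{1/2} and ‖σ‖_𝒜 = ⟨𝒜σ, σ⟩^{1/2}. Let S be a symmetric and W a skew-symmetric d×d real matrix. Then: (i) for every d×d real matrix τ, ⟨τ, S + W⟩ ≤ ‖τ‖_𝒞 · (‖S‖_𝒜² + ‖W‖_𝒜²)^{1/2}; (ii) the matrix τ₀ = 𝒜S + 𝒜W satisfies ⟨τ₀, S + W⟩ = ‖S‖_𝒜² + ‖W‖_𝒜² and ‖τ₀‖_𝒞 = (‖S‖_𝒜² + ‖W‖_𝒜²)^{1/2}, so the bound in (i) is attained; (iii) consequently the supremum of ⟨τ, S+W⟩/‖τ‖_𝒞 over nonzero τ equals (‖S‖_𝒜² + ‖W‖_𝒜²)^{1/2}, which lies between (1/√2)(‖S‖_𝒜 + ‖W‖_𝒜) and ‖S‖_𝒜 + ‖W‖_𝒜. -/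
/-!
Since `𝒞` inverts `𝒜`, the matrix `τ₀ = 𝒜S + 𝒜W = 𝒜(S + W)` satisfies `𝒞τ₀ = S + W`, so
`⟨τ, S + W⟩ = ⟨𝒞τ, τ₀⟩`, and the Cauchy–Schwarz inequality for the positive definite form
`⟨𝒞·, ·⟩` gives `⟨τ, S + W⟩ ≤ ‖τ‖_𝒞 ‖τ₀‖_𝒞`, with equality at `τ = τ₀`. A symmetric and a
skew-symmetric matrix are Frobenius-orthogonal and the latter is traceless, so the cross terms of
`‖τ₀‖_𝒞² = ⟨𝒜(S + W), S + W⟩` vanish, leaving `‖S‖_𝒜² + ‖W‖_𝒜²`. The final bounds are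
`(a + b)/√2 ≤ √(a² + b²) ≤ a + b` for `a, b ≥ 0`.
-/

open Matrix BigOperators

/-- Frobenius inner product on d×d real matrices. -/
noncomputable def frob {d : ℕ} (σ τ : Matrix (Fin d) (Fin d) ℝ) : ℝ :=
  ∑ i, ∑ j, σ i j * τ i j

/-- The compliance operator 𝒞τ = (1/(2μ))(τ − (λ/(2μ + dλ)) tr(τ) I). -/
noncomputable def compl (d : ℕ) (μ lam : ℝ) (τ : Matrix (Fin d) (Fin d) ℝ) :
    Matrix (Fin d) (Fin d) ℝ :=
  (1 / (2 * μ)) • (τ - ((lam / (2 * μ + d * lam)) * τ.trace) • (1 : Matrix (Fin d) (Fin d) ℝ))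

/-- The elasticity operator 𝒜τ = 2μτ + λ tr(τ) I. -/
noncomputable def elas (d : ℕ) (μ lam : ℝ) (τ : Matrix (Fin d) (Fin d) ℝ) :
    Matrix (Fin d) (Fin d) ℝ :=
  (2 * μ) • τ + (lam * τ.trace) • (1 : Matrix (Fin d) (Fin d) ℝ)

/-- The compliance norm ‖τ‖_𝒞 = (𝒞τ, τ)^{1/2}. -/
noncomputable def cnorm (d : ℕ) (μ lam : ℝ) (τ : Matrix (Fin d) (Fin d) ℝ) : ℝ :=
  Real.sqrt (frob (compl d μ lam τ) τ)

/-- The elasticity norm ‖σ‖_𝒜 = (𝒜σ, σ)^{1/2}. -/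
noncomputable def anorm (d : ℕ) (μ lam : ℝ) (σ : Matrix (Fin d) (Fin d) ℝ) : ℝ :=
  Real.sqrt (frob (elas d μ lam σ) σ)

section Frobenius

variable {d : ℕ}

lemma frob_eq_vec_dotProduct (σ τ : Matrix (Fin d) (Fin d) ℝ) : frob σ τ = vec σ ⬝ᵥ vec τ := by
  rw [frob, dotProduct, Fintype.sum_prod_type, Finset.sum_comm]
  rfl

lemma frob_comm (σ τ : Matrix (Fin d) (Fin d) ℝ) : frob σ τ = frob τ σ := by
  simp only [frob_eq_vec_dotProduct, dotProduct_comm]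

lemma frob_add_left (σ₁ σ₂ τ : Matrix (Fin d) (Fin d) ℝ) :
    frob (σ₁ + σ₂) τ = frob σ₁ τ + frob σ₂ τ := by
  simp only [frob_eq_vec_dotProduct, vec_add, add_dotProduct]

lemma frob_sub_left (σ₁ σ₂ τ : Matrix (Fin d) (Fin d) ℝ) :
    frob (σ₁ - σ₂) τ = frob σ₁ τ - frob σ₂ τ := by
  simp only [frob_eq_vec_dotProduct, vec_sub, sub_dotProduct]

lemma frob_smul_left (c : ℝ) (σ τ : Matrix (Fin d) (Fin d) ℝ) :
    frob (c • σ) τ = c * frob σ τ := by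
  simp only [frob_eq_vec_dotProduct, vec_smul, smul_dotProduct, smul_eq_mul]

lemma frob_add_right (σ τ₁ τ₂ : Matrix (Fin d) (Fin d) ℝ) :
    frob σ (τ₁ + τ₂) = frob σ τ₁ + frob σ τ₂ := by
  simp only [frob_eq_vec_dotProduct, vec_add, dotProduct_add]

lemma frob_smul_right (c : ℝ) (σ τ : Matrix (Fin d) (Fin d) ℝ) :
    frob σ (c • τ) = c * frob σ τ := by
  simp only [frob_eq_vec_dotProduct, vec_smul, dotProduct_smul, smul_eq_mul]

lemma frob_one_left (τ : Matrix (Fin d) (Fin d) ℝ) : frob 1 τ = τ.trace := by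
  simp [frob, one_apply, trace]

lemma frob_transpose (σ τ : Matrix (Fin d) (Fin d) ℝ) : frob σᵀ τᵀ = frob σ τ := by
  rw [frob, Finset.sum_comm]
  rfl

lemma frob_self_pos {τ : Matrix (Fin d) (Fin d) ℝ} (hτ : τ ≠ 0) : 0 < frob τ τ := by
  rw [frob_eq_vec_dotProduct]
  exact lt_of_le_of_ne (dotProduct_self_star_nonneg _)
    (Ne.symm (dotProduct_self_eq_zero.not.2 (vec_eq_zero_iff.not.2 hτ)))

lemma sq_trace_le_mul_frob_self (τ : Matrix (Fin d) (Fin d) ℝ) :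
    τ.trace ^ 2 ≤ d * frob τ τ := by
  calc τ.trace ^ 2 ≤ d * ∑ i, τ i i ^ 2 := by
        simpa [trace] using sq_sum_le_card_mul_sum_sq (s := Finset.univ) (f := fun i => τ i i)
    _ ≤ d * frob τ τ := by
        refine mul_le_mul_of_nonneg_left (Finset.sum_le_sum fun i _ => ?_) d.cast_nonneg
        simpa [sq] using Finset.single_le_sum (fun j _ => mul_self_nonneg (τ i j))
          (Finset.mem_univ i)

lemma frob_eq_zero_of_transpose_eq_of_transpose_eq_neg {S W : Matrix (Fin d) (Fin d) ℝ}
    (hS : Sᵀ = S) (hW : Wᵀ = -W) : frob S W = 0 := by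
  have h := frob_transpose S W
  rw [hS, hW, ← neg_one_smul ℝ W, frob_smul_right] at h
  linarith

end Frobenius

section Lame

variable {d : ℕ} {μ lam : ℝ}

lemma frob_compl_left (τ ρ : Matrix (Fin d) (Fin d) ℝ) :
    frob (compl d μ lam τ) ρ =
      1 / (2 * μ) * (frob τ ρ - lam / (2 * μ + d * lam) * τ.trace * ρ.trace) := by
  rw [_root_.compl, frob_smul_left, frob_sub_left, frob_smul_left, frob_one_left, mul_assoc]

lemma frob_elas_left (σ ρ : Matrix (Fin d) (Fin d) ℝ) :
    frob (elas d μ lam σ) ρ = 2 * μ * frob σ ρ + lam * σ.trace * ρ.trace := by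
  rw [elas, frob_add_left, frob_smul_left, frob_smul_left, frob_one_left]

lemma frob_compl_comm (τ ρ : Matrix (Fin d) (Fin d) ℝ) :
    frob (compl d μ lam τ) ρ = frob (compl d μ lam ρ) τ := by
  rw [frob_compl_left, frob_compl_left, frob_comm]
  ring

lemma elas_add (σ₁ σ₂ : Matrix (Fin d) (Fin d) ℝ) :
    elas d μ lam (σ₁ + σ₂) = elas d μ lam σ₁ + elas d μ lam σ₂ := by
  simp only [elas, trace_add, smul_add, mul_add, add_smul]
  abel

lemma trace_elas (σ : Matrix (Fin d) (Fin d) ℝ) :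
    (elas d μ lam σ).trace = (2 * μ + d * lam) * σ.trace := by
  simp only [elas, trace_add, trace_smul, trace_one, Fintype.card_fin, smul_eq_mul]
  ring

lemma compl_elas (hμ : μ ≠ 0) (hlam : 2 * μ + d * lam ≠ 0) (σ : Matrix (Fin d) (Fin d) ℝ) :
    compl d μ lam (elas d μ lam σ) = σ := by
  have hcoef : lam / (2 * μ + d * lam) * ((2 * μ + d * lam) * σ.trace) = lam * σ.trace := by
    rw [← mul_assoc, div_mul_cancel₀ lam hlam]
  rw [_root_.compl, trace_elas, hcoef, elas, add_sub_cancel_right, smul_smul,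
    one_div_mul_cancel (mul_ne_zero two_ne_zero hμ), one_smul]

/-- With `F = ‖τ‖²` and `T = tr(τ)² ∈ [0, d F]`, `2μ(2μ + dλ)⟨𝒞τ, τ⟩ = (2μ + dλ)F - λT`,
which is affine in `T` and positive at both ends. -/
lemma frob_compl_self_pos (hμ : 0 < μ) (hlam : 0 < 2 * μ + d * lam)
    {τ : Matrix (Fin d) (Fin d) ℝ} (hτ : τ ≠ 0) : 0 < frob (compl d μ lam τ) τ := by
  have hF := frob_self_pos hτ
  have hT := sq_trace_le_mul_frob_self τ
  have hT0 := sq_nonneg τ.trace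
  have hnum : 0 < (2 * μ + d * lam) * frob τ τ - lam * τ.trace ^ 2 := by
    rcases le_or_gt 0 lam with h | h <;> nlinarith
  have heq : frob (compl d μ lam τ) τ =
      ((2 * μ + d * lam) * frob τ τ - lam * τ.trace ^ 2) / (2 * μ * (2 * μ + d * lam)) := by
    rw [frob_compl_left]
    have hX := hlam.ne'
    generalize 2 * μ + d * lam = X at hX ⊢
    field_simp
  rw [heq]
  positivity

lemma frob_compl_self_nonneg (hμ : 0 < μ) (hlam : 0 < 2 * μ + d * lam)
    (τ : Matrix (Fin d) (Fin d) ℝ) : 0 ≤ frob (compl d μ lam τ) τ := by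
  rcases eq_or_ne τ 0 with rfl | hτ
  · simp [_root_.compl, frob]
  · exact (frob_compl_self_pos hμ hlam hτ).le

lemma frob_elas_self_nonneg (hμ : 0 < μ) (hlam : 0 < 2 * μ + d * lam)
    (σ : Matrix (Fin d) (Fin d) ℝ) : 0 ≤ frob (elas d μ lam σ) σ := by
  -- `⟨𝒜σ, σ⟩ = ⟨𝒞(𝒜σ), 𝒜σ⟩` because `𝒞𝒜 = id`
  simpa [compl_elas hμ.ne' hlam.ne', frob_comm σ] using
    frob_compl_self_nonneg hμ hlam (elas d μ lam σ)

lemma anorm_sq (hμ : 0 < μ) (hlam : 0 < 2 * μ + d * lam) (σ : Matrix (Fin d) (Fin d) ℝ) :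
    anorm d μ lam σ ^ 2 = frob (elas d μ lam σ) σ :=
  Real.sq_sqrt (frob_elas_self_nonneg hμ hlam σ)

variable (d μ lam) in
noncomputable def complForm : LinearMap.BilinForm ℝ (Matrix (Fin d) (Fin d) ℝ) :=
  LinearMap.mk₂ ℝ (fun τ ρ => frob (compl d μ lam τ) ρ)
    (fun τ₁ τ₂ ρ => by simp only [frob_compl_left, frob_add_left, trace_add]; ring)
    (fun c τ ρ => by simp only [frob_compl_left, frob_smul_left, trace_smul, smul_eq_mul]; ring)
    (fun τ ρ₁ ρ₂ => frob_add_right _ ρ₁ ρ₂)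
    (fun c τ ρ => frob_smul_right c _ ρ)

lemma frob_compl_le_cnorm_mul_cnorm (hμ : 0 < μ) (hlam : 0 < 2 * μ + d * lam)
    (τ ρ : Matrix (Fin d) (Fin d) ℝ) :
    frob (compl d μ lam τ) ρ ≤ cnorm d μ lam τ * cnorm d μ lam ρ := by
  have hsq : frob (compl d μ lam τ) ρ ^ 2 ≤
      frob (compl d μ lam τ) τ * frob (compl d μ lam ρ) ρ :=
    (complForm d μ lam).apply_sq_le_of_symm (frob_compl_self_nonneg hμ hlam)
      ⟨frob_compl_comm⟩ τ ρ
  rw [cnorm, cnorm, ← Real.sqrt_mul (frob_compl_self_nonneg hμ hlam τ)]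
  exact (le_abs_self _).trans (Real.abs_le_sqrt hsq)

end Lame

lemma Matrix.trace_eq_zero_of_transpose_eq_neg {n : Type*} [Fintype n] {W : Matrix n n ℝ}
    (hW : Wᵀ = -W) : W.trace = 0 := by
  have h := trace_transpose W
  rw [hW, trace_neg] at h
  linarith

section SymmSkew

variable {d : ℕ} {μ lam : ℝ} {S W : Matrix (Fin d) (Fin d) ℝ}

lemma frob_elas_of_symm_of_skew (hS : Sᵀ = S) (hW : Wᵀ = -W) : frob (elas d μ lam S) W = 0 := by
  rw [frob_elas_left, frob_eq_zero_of_transpose_eq_of_transpose_eq_neg hS hW,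
    trace_eq_zero_of_transpose_eq_neg hW]
  ring

lemma frob_elas_of_skew_of_symm (hS : Sᵀ = S) (hW : Wᵀ = -W) : frob (elas d μ lam W) S = 0 := by
  rw [frob_elas_left, frob_comm, frob_eq_zero_of_transpose_eq_of_transpose_eq_neg hS hW,
    trace_eq_zero_of_transpose_eq_neg hW]
  ring

lemma frob_elas_add_elas_add (hS : Sᵀ = S) (hW : Wᵀ = -W) :
    frob (elas d μ lam S + elas d μ lam W) (S + W) =
      frob (elas d μ lam S) S + frob (elas d μ lam W) W := by
  rw [frob_add_left, frob_add_right, frob_add_right, frob_elas_of_symm_of_skew hS hW,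
    frob_elas_of_skew_of_symm hS hW, add_zero, zero_add]

end SymmSkew

lemma isLUB_div_of_le_of_eq {V : Type*} [Zero V] {f g : V → ℝ} {M : ℝ}
    (hg : ∀ x, x ≠ 0 → 0 < g x) (hle : ∀ x, f x ≤ g x * M) {x₀ : V} (hx₀ : x₀ ≠ 0)
    (heq : f x₀ = g x₀ * M) : IsLUB {r | ∃ x, x ≠ 0 ∧ r = f x / g x} M := by
  refine ⟨?_, fun b hb => hb ⟨x₀, hx₀, ?_⟩⟩
  · rintro _ ⟨x, hx, rfl⟩
    rw [div_le_iff₀ (hg x hx), mul_comm]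
    exact hle x
  · rw [heq, mul_div_cancel_left₀ _ (hg x₀ hx₀).ne']

lemma Real.sqrt_sq_add_sq_le_add {a b : ℝ} (ha : 0 ≤ a) (hb : 0 ≤ b) :
    √(a ^ 2 + b ^ 2) ≤ a + b :=
  (Real.sqrt_le_left (add_nonneg ha hb)).2 (by nlinarith [mul_nonneg ha hb])

lemma Real.one_div_sqrt_two_mul_add_le_sqrt_sq_add_sq {a b : ℝ} (ha : 0 ≤ a) (hb : 0 ≤ b) :
    1 / √2 * (a + b) ≤ √(a ^ 2 + b ^ 2) := by
  rw [Real.le_sqrt (by positivity) (by positivity), mul_pow, div_pow,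
    Real.sq_sqrt zero_le_two]
  nlinarith [sq_nonneg (a - b)]

/-- Pointwise Babuška–Brezzi duality identity: the supremum of ⟨τ, S+W⟩/‖τ‖_𝒞 over nonzero τ
equals (‖S‖_𝒜² + ‖W‖_𝒜²)^{1/2}, the bound being attained at τ₀ = 𝒜S + 𝒜W. -/
theorem babuska_brezzi_duality (d : ℕ) (hd : 1 ≤ d) (μ lam : ℝ) (hμ : 0 < μ)
    (hlam : 0 < 2 * μ + d * lam) (S W : Matrix (Fin d) (Fin d) ℝ)
    (hS : Sᵀ = S) (hW : Wᵀ = -W) :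
    (∀ τ : Matrix (Fin d) (Fin d) ℝ,
      frob τ (S + W) ≤
        cnorm d μ lam τ * Real.sqrt (frob (elas d μ lam S) S + frob (elas d μ lam W) W)) ∧
    (frob (elas d μ lam S + elas d μ lam W) (S + W) =
        frob (elas d μ lam S) S + frob (elas d μ lam W) W ∧
      cnorm d μ lam (elas d μ lam S + elas d μ lam W) =
        Real.sqrt (frob (elas d μ lam S) S + frob (elas d μ lam W) W)) ∧
    IsLUB {r : ℝ | ∃ τ : Matrix (Fin d) (Fin d) ℝ, τ ≠ 0 ∧ r = frob τ (S + W) / cnorm d μ lam τ}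
      (Real.sqrt (frob (elas d μ lam S) S + frob (elas d μ lam W) W)) ∧
    (1 / Real.sqrt 2) * (anorm d μ lam S + anorm d μ lam W) ≤
      Real.sqrt (frob (elas d μ lam S) S + frob (elas d μ lam W) W) ∧
    Real.sqrt (frob (elas d μ lam S) S + frob (elas d μ lam W) W) ≤
      anorm d μ lam S + anorm d μ lam W := by
  have hpair := frob_elas_add_elas_add (μ := μ) (lam := lam) hS hW
  set τ₀ := elas d μ lam S + elas d μ lam W with hτ₀
  have hcompl : compl d μ lam τ₀ = S + W := by
    rw [hτ₀, ← elas_add, compl_elas hμ.ne' hlam.ne']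
  have hcnorm : cnorm d μ lam τ₀ = √(frob (elas d μ lam S) S + frob (elas d μ lam W) W) := by
    rw [cnorm, hcompl, frob_comm, hpair]
  have hbound (τ : Matrix (Fin d) (Fin d) ℝ) :
      frob τ (S + W) ≤ cnorm d μ lam τ * √(frob (elas d μ lam S) S + frob (elas d μ lam W) W) := by
    rw [← hcompl, ← hcnorm, frob_comm, frob_compl_comm]
    exact frob_compl_le_cnorm_mul_cnorm hμ hlam τ τ₀
  obtain ⟨τ₁, hτ₁, hattain⟩ : ∃ τ₁ : Matrix (Fin d) (Fin d) ℝ, τ₁ ≠ 0 ∧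
      frob τ₁ (S + W) = cnorm d μ lam τ₁ * √(frob (elas d μ lam S) S + frob (elas d μ lam W) W) := by
    by_cases h0 : τ₀ = 0
    · have : Nonempty (Fin d) := Fin.pos_iff_nonempty.1 hd
      refine ⟨1, one_ne_zero, ?_⟩
      rw [← hcompl, ← hpair, h0]
      simp [_root_.compl, frob]
    · refine ⟨τ₀, h0, ?_⟩
      rw [hpair, hcnorm, Real.mul_self_sqrt (add_nonneg (frob_elas_self_nonneg hμ hlam S)
        (frob_elas_self_nonneg hμ hlam W))]
  refine ⟨hbound, ⟨hpair, hcnorm⟩, isLUB_div_of_le_of_eq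
    (fun τ hτ => Real.sqrt_pos.2 (frob_compl_self_pos hμ hlam hτ)) hbound hτ₁ hattain, ?_⟩
  rw [← anorm_sq hμ hlam S, ← anorm_sq hμ hlam W]
  exact ⟨Real.one_div_sqrt_two_mul_add_le_sqrt_sq_add_sq (Real.sqrt_nonneg _) (Real.sqrt_nonneg _),
    Real.sqrt_sq_add_sq_le_add (Real.sqrt_nonneg _) (Real.sqrt_nonneg _)⟩
end

section
/- Let X and Y be real Hilbert spaces and let T : Y → X be a linear isometry. Define the bilinear form B((σ,x),(τ,y)) = ⟨σ, τ⟩_X + ⟨T x, τ⟩_X − ⟨σ, T y⟩_X on (X × Y) × (X × Y). Then for every (σ, x) ∈ X × Y there exists (τ, y) ∈ X × Y, with (τ, y) ≠ (0,0) whenever (σ, x) ≠ (0,0), such that B((σ,x),(τ,y)) ≥ ((√5 − 1)/2) · (‖σ‖² + ‖x‖²)^{1/2} · (‖τ‖² + ‖y‖²)^{1/2}. In other words, the twisted saddle-point form B satisfies the inf-sup condition with the explicit constant (√5 − 1)/2 (the inverse golden ratio) with respect to the norm ‖(σ,x)‖ = (‖σ‖² + ‖x‖²)^{1/2}. -/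
/-!
Test `(σ, x)` against `τ = σ + T x` and `y = -(⟪σ, T x⟫ / ‖x‖²) • x`, the component of the
"adjoint" `T* σ` along `x`. Then `B((σ,x),(τ,y)) = ‖τ‖² + ‖y‖²`, and it remains to bound
`‖τ‖² + ‖y‖² = ‖σ + T x‖² + (⟪σ, T x⟫ / ‖x‖)²` below by `((√5 - 1)/2)² (‖σ‖² + ‖x‖²)`.
By Cauchy–Schwarz this reduces to the scalar inequality `a² + (t - r)² ≥ γ² (a² + t²)` for
`r ≤ a`; at the worst case `r = a` the difference is a perfect square exactly when
`γ = (√5 - 1)/2` is the inverse golden ratio.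
-/

open RealInnerProductSpace

lemma sq_sqrt_five_sub_one_div_two : ((√5 - 1) / 2) ^ 2 = (3 - √5) / 2 := by
  have h5 : √5 ^ 2 = 5 := Real.sq_sqrt (by norm_num)
  linear_combination h5 / 4

lemma sq_sqrt_five_sub_one_div_two_mul_le {a t r : ℝ} (ha : 0 ≤ a) (ht : 0 ≤ t) (hr : r ≤ a) :
    ((√5 - 1) / 2) ^ 2 * (a ^ 2 + t ^ 2) ≤ a ^ 2 + (t - r) ^ 2 := by
  have h5 : √5 ^ 2 = 5 := Real.sq_sqrt (by norm_num)
  have h2 : 2 ≤ √5 := by nlinarith [Real.sqrt_nonneg 5]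
  rw [sq_sqrt_five_sub_one_div_two]
  rcases le_total t a with hta | hat
  · nlinarith [sq_nonneg (t - r), mul_nonneg (sub_nonneg.2 h2) (sq_nonneg t)]
  · -- the difference at `r = a` is `(1 + √5) / 8 * ((√5 - 1) t - 2 a)²`
    have h_at_a : (3 - √5) / 2 * (a ^ 2 + t ^ 2) ≤ a ^ 2 + (t - a) ^ 2 := by
      nlinarith [sq_nonneg ((√5 - 1) * t - 2 * a)]
    nlinarith [mul_nonneg (sub_nonneg.2 hat) (sub_nonneg.2 hr)]

lemma sq_sqrt_five_sub_one_div_two_mul_le_norm_add_sq {X : Type*} [NormedAddCommGroup X]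
    [InnerProductSpace ℝ X] (u v : X) :
    ((√5 - 1) / 2) ^ 2 * (‖u‖ ^ 2 + ‖v‖ ^ 2) ≤ ‖u + v‖ ^ 2 + (⟪u, v⟫ / ‖v‖) ^ 2 := by
  set r := |⟪u, v⟫| / ‖v‖
  have hr : r ≤ ‖u‖ :=
    div_le_of_le_mul₀ (norm_nonneg v) (norm_nonneg u) (abs_real_inner_le_norm u v)
  have hrv : r * ‖v‖ = |⟪u, v⟫| := by
    rcases (norm_nonneg v).eq_or_lt with hv | hv
    · have : |⟪u, v⟫| ≤ 0 := by simpa [← hv] using abs_real_inner_le_norm u v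
      simp only [r, ← hv, div_zero, zero_mul]
      linarith [abs_nonneg ⟪u, v⟫]
    · exact div_mul_cancel₀ _ hv.ne'
  calc ((√5 - 1) / 2) ^ 2 * (‖u‖ ^ 2 + ‖v‖ ^ 2)
      ≤ ‖u‖ ^ 2 + (‖v‖ - r) ^ 2 :=
        sq_sqrt_five_sub_one_div_two_mul_le (norm_nonneg u) (norm_nonneg v) hr
    _ ≤ ‖u‖ ^ 2 + 2 * ⟪u, v⟫ + ‖v‖ ^ 2 + r ^ 2 := by nlinarith [neg_abs_le ⟪u, v⟫, hrv]
    _ = ‖u + v‖ ^ 2 + (⟪u, v⟫ / ‖v‖) ^ 2 := by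
      rw [norm_add_sq_real, div_pow, div_pow, sq_abs]

lemma sq_sqrt_five_sub_one_div_two_mul_le_saddle
    {X Y : Type*} [NormedAddCommGroup X] [InnerProductSpace ℝ X]
    [NormedAddCommGroup Y] [InnerProductSpace ℝ Y] (T : Y →ₗᵢ[ℝ] X) (σ : X) (x : Y) :
    ((√5 - 1) / 2) ^ 2 * (‖σ‖ ^ 2 + ‖x‖ ^ 2) ≤
      ‖σ + T x‖ ^ 2 + ‖-(⟪σ, T x⟫ / ‖x‖ ^ 2) • x‖ ^ 2 := by
  have hy : ‖-(⟪σ, T x⟫ / ‖x‖ ^ 2) • x‖ ^ 2 = (⟪σ, T x⟫ / ‖T x‖) ^ 2 := by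
    rw [T.norm_map, norm_smul, norm_neg, Real.norm_eq_abs, mul_pow, sq_abs]
    rcases eq_or_ne ‖x‖ 0 with hx | hx
    · simp [hx]
    · field_simp
  simpa only [hy, T.norm_map] using sq_sqrt_five_sub_one_div_two_mul_le_norm_add_sq σ (T x)

lemma saddle_form_eq {X Y : Type*} [NormedAddCommGroup X] [InnerProductSpace ℝ X]
    [NormedAddCommGroup Y] [InnerProductSpace ℝ Y] (T : Y →ₗᵢ[ℝ] X) (σ : X) (x : Y) :
    ⟪σ, σ + T x⟫ + ⟪T x, σ + T x⟫ - ⟪σ, T (-(⟪σ, T x⟫ / ‖x‖ ^ 2) • x)⟫ =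
      ‖σ + T x‖ ^ 2 + ‖-(⟪σ, T x⟫ / ‖x‖ ^ 2) • x‖ ^ 2 := by
  rw [← inner_add_left, real_inner_self_eq_norm_sq, map_smul, inner_smul_right, norm_smul,
    norm_neg, Real.norm_eq_abs, mul_pow, sq_abs]
  rcases eq_or_ne ‖x‖ 0 with hx | hx
  · simp [hx]
  · field_simp
    ring

lemma mul_sqrt_mul_sqrt_le {c m n : ℝ} (hc : 0 ≤ c) (hn : 0 ≤ n)
    (h : c ^ 2 * m ≤ n) : c * √m * √n ≤ n := by
  have hcm : c * √m ≤ √n := by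
    rw [← Real.sqrt_sq hc, ← Real.sqrt_mul (sq_nonneg c)]
    exact Real.sqrt_le_sqrt h
  calc c * √m * √n ≤ √n * √n := mul_le_mul_of_nonneg_right hcm (Real.sqrt_nonneg n)
    _ = n := Real.mul_self_sqrt hn

theorem saddle_point_inf_sup_general (X Y : Type*)
    [NormedAddCommGroup X] [InnerProductSpace ℝ X]
    [NormedAddCommGroup Y] [InnerProductSpace ℝ Y]
    (T : Y →ₗᵢ[ℝ] X) (σ : X) (x : Y) :
    ∃ τ : X, ∃ y : Y,
      ((σ, x) ≠ (0, 0) → (τ, y) ≠ (0, 0)) ∧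
      (inner ℝ σ τ + inner ℝ (T x) τ - inner ℝ σ (T y) : ℝ) ≥
        ((Real.sqrt 5 - 1) / 2) * Real.sqrt (‖σ‖ ^ 2 + ‖x‖ ^ 2) *
          Real.sqrt (‖τ‖ ^ 2 + ‖y‖ ^ 2) := by
  have hbound := sq_sqrt_five_sub_one_div_two_mul_le_saddle T σ x
  have hγ : 0 < (√5 - 1) / 2 := by
    have : 1 < √5 := by rw [Real.lt_sqrt zero_le_one]; norm_num
    linarith
  refine ⟨σ + T x, -(⟪σ, T x⟫ / ‖x‖ ^ 2) • x, fun hσx hτy => hσx ?_, ?_⟩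
  · obtain ⟨hτ, hy⟩ := Prod.mk.inj hτy
    simp only [hτ, hy, norm_zero, zero_pow two_ne_zero, add_zero] at hbound
    have hσx0 : ‖σ‖ ^ 2 + ‖x‖ ^ 2 ≤ 0 := nonpos_of_mul_nonpos_right hbound (by positivity)
    rw [Prod.mk.injEq, ← norm_eq_zero (a := σ), ← norm_eq_zero (a := x)]
    constructor <;> nlinarith [norm_nonneg σ, norm_nonneg x]
  · rw [ge_iff_le, saddle_form_eq]
    exact mul_sqrt_mul_sqrt_le hγ.le (by positivity) hbound

/-- Abstract stability theorem for the elasticity saddle-point problem: the twisted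
saddle-point form B((σ,x),(τ,y)) = ⟨σ,τ⟩ + ⟨Tx,τ⟩ − ⟨σ,Ty⟩ built from a linear isometry
T : Y → X between real Hilbert spaces satisfies the inf-sup condition with constant
(√5 − 1)/2. -/
theorem saddle_point_inf_sup (X Y : Type*)
    [NormedAddCommGroup X] [InnerProductSpace ℝ X] [CompleteSpace X]
    [NormedAddCommGroup Y] [InnerProductSpace ℝ Y] [CompleteSpace Y]
    (T : Y →ₗᵢ[ℝ] X) (σ : X) (x : Y) :
    ∃ τ : X, ∃ y : Y,
      ((σ, x) ≠ (0, 0) → (τ, y) ≠ (0, 0)) ∧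
      (inner ℝ σ τ + inner ℝ (T x) τ - inner ℝ σ (T y) : ℝ) ≥
        ((Real.sqrt 5 - 1) / 2) * Real.sqrt (‖σ‖ ^ 2 + ‖x‖ ^ 2) *
          Real.sqrt (‖τ‖ ^ 2 + ‖y‖ ^ 2) :=
  saddle_point_inf_sup_general X Y T σ x
end

section
/- Let p₀, p₁, p₂, p₃ ∈ ℝ³ be affinely independent points (an affine basis of ℝ³), let λ_l : ℝ³ → ℝ (l = 0,…,3) be the associated barycentric coordinate functions (affine maps with λ_l(p_m) = δ_{lm} and Σ_l λ_l ≡ 1), and let g_l ∈ ℝ³ be the constant gradient of λ_l, i.e. the unique vector with λ_l(x + v) = λ_l(x) + ⟨g_l, v⟩ for all x, v ∈ ℝ³. Define the matrix-valued bubble function b_K(x) = Σ_{l=0}^{3} (Π_{m ≠ l} λ_m(x)) g_l g_lᵀ. Then for every x in the closed tetrahedron K = convexHull{p₀,p₁,p₂,p₃} the matrix b_K(x) is symmetric positive semidefinite, and for every x in the interior of K the matrix b_K(x) is positive definite: wᵀ b_K(x) w > 0 for all nonzero w ∈ ℝ³. -/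
/-!
Being affine and interpolating the vertices, the `λ_l` are the coordinates of the affine basis
`p`; hence they are nonnegative on the closed tetrahedron and positive in its interior, so every
weight `∏_{m ≠ l} λ_m(x)` of the quadratic form
`wᵀ b_K(x) w = ∑_l (∏_{m ≠ l} λ_m(x)) ⟨g_l, w⟩²` is nonnegative, resp. positive. A vector `w`
with `⟨g_l, w⟩ = 0` for all `l` leaves every barycentric coordinate unchanged under translation
by `w`, so `w = 0`.
-/

open Matrix

section AffineCoordinates

variable {ι k V P : Type*} [Ring k] [AddCommGroup V] [Module k V] [AddTorsor V P]

theorem AffineBasis.eq_coord_of_apply_eq_ite [DecidableEq ι] (b : AffineBasis ι k P)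
    {f : P →ᵃ[k] k} {i : ι} (hf : ∀ j, f (b j) = if i = j then 1 else 0) : f = b.coord i :=
  AffineMap.ext_on b.tot <| by rintro - ⟨j, rfl⟩; simp [hf, b.coord_apply]

theorem AffineBasis.eq_zero_of_linear_coord_eq_zero [Finite ι] (b : AffineBasis ι k P) {v : V}
    (hv : ∀ i, (b.coord i).linear v = 0) : v = 0 := by
  obtain ⟨i₀⟩ := b.nonempty
  have : v +ᵥ b i₀ = b i₀ := b.ext_elem fun i => by rw [AffineMap.map_vadd, hv, zero_vadd]
  simpa using congrArg (· -ᵥ b i₀) this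

end AffineCoordinates

noncomputable def AffineMap.ofGradient {E : Type*} [NormedAddCommGroup E] [InnerProductSpace ℝ E]
    (f : E → ℝ) (g : E) (hf : ∀ x v, f (x + v) = f x + inner ℝ g v) : E →ᵃ[ℝ] ℝ where
  toFun := f
  linear := innerₛₗ ℝ g
  map_vadd' x v := by simp [hf, add_comm]

section QuadraticForm

variable {ι n R : Type*} [Fintype ι] [CommRing R]

theorem transpose_sum_smul_vecMulVec_self (c : ι → R) (v : ι → n → R) :
    (∑ l, c l • vecMulVec (v l) (v l))ᵀ = ∑ l, c l • vecMulVec (v l) (v l) := by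
  simp [transpose_sum, transpose_vecMulVec]

variable [Fintype n]

theorem dotProduct_sum_smul_vecMulVec_self_mulVec (c : ι → R) (v : ι → n → R) (w : n → R) :
    w ⬝ᵥ (∑ l, c l • vecMulVec (v l) (v l)) *ᵥ w = ∑ l, c l * (v l ⬝ᵥ w) ^ 2 := by
  rw [Matrix.sum_mulVec, dotProduct_sum]
  refine Finset.sum_congr rfl fun l _ => ?_
  simp [smul_mulVec, vecMulVec_mulVec, dotProduct_comm w, sq]

variable [LinearOrder R] [IsStrictOrderedRing R]

theorem dotProduct_sum_smul_vecMulVec_self_mulVec_nonneg {c : ι → R} (hc : ∀ l, 0 ≤ c l)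
    (v : ι → n → R) (w : n → R) : 0 ≤ w ⬝ᵥ (∑ l, c l • vecMulVec (v l) (v l)) *ᵥ w := by
  rw [dotProduct_sum_smul_vecMulVec_self_mulVec]
  exact Finset.sum_nonneg fun l _ => mul_nonneg (hc l) (sq_nonneg _)

theorem dotProduct_sum_smul_vecMulVec_self_mulVec_pos {c : ι → R} (hc : ∀ l, 0 < c l)
    {v : ι → n → R} {w : n → R} (hv : (∀ l, v l ⬝ᵥ w = 0) → w = 0) (hw : w ≠ 0) :
    0 < w ⬝ᵥ (∑ l, c l • vecMulVec (v l) (v l)) *ᵥ w := by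
  obtain ⟨l, hl⟩ : ∃ l, v l ⬝ᵥ w ≠ 0 := by
    by_contra! h
    exact hw (hv h)
  rw [dotProduct_sum_smul_vecMulVec_self_mulVec]
  exact Finset.sum_pos' (fun l _ => mul_nonneg (hc l).le (sq_nonneg _))
    ⟨l, Finset.mem_univ l, mul_pos (hc l) (sq_pos_of_ne_zero hl)⟩

end QuadraticForm

theorem tetrahedron_matrix_bubble_posdef_general
    (p : Fin 4 → EuclideanSpace ℝ (Fin 3)) (hp : AffineIndependent ℝ p)
    (lam : Fin 4 → EuclideanSpace ℝ (Fin 3) → ℝ)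
    (g : Fin 4 → EuclideanSpace ℝ (Fin 3))
    (hinterp : ∀ l m, lam l (p m) = if l = m then 1 else 0)
    (hgrad : ∀ l x v, lam l (x + v) = lam l x + (inner ℝ (g l) v : ℝ))
    (bK : EuclideanSpace ℝ (Fin 3) → Matrix (Fin 3) (Fin 3) ℝ)
    (hbK : ∀ x, bK x = ∑ l, (∏ m ∈ Finset.univ.erase l, lam m x) •
        Matrix.of (fun i j => g l i * g l j)) :
    (∀ x ∈ convexHull ℝ (Set.range p),
      (bK x)ᵀ = bK x ∧ ∀ w : Fin 3 → ℝ, 0 ≤ w ⬝ᵥ (bK x).mulVec w) ∧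
    (∀ x ∈ interior (convexHull ℝ (Set.range p)),
      ∀ w : Fin 3 → ℝ, w ≠ 0 → 0 < w ⬝ᵥ (bK x).mulVec w) := by
  let b : AffineBasis (Fin 4) ℝ (EuclideanSpace ℝ (Fin 3)) :=
    ⟨p, hp, hp.affineSpan_eq_top_iff_card_eq_finrank_add_one.mpr (by simp)⟩
  have hcoord (l : Fin 4) : AffineMap.ofGradient (lam l) (g l) (hgrad l) = b.coord l :=
    b.eq_coord_of_apply_eq_ite (hinterp l)
  have hlam (l : Fin 4) : lam l = b.coord l := congrArg DFunLike.coe (hcoord l)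
  have hb : ⇑b = p := rfl
  have hgrad_sep (w : Fin 3 → ℝ) (hw : ∀ l, (g l).ofLp ⬝ᵥ w = 0) : w = 0 := by
    have := b.eq_zero_of_linear_coord_eq_zero (v := WithLp.toLp 2 w) fun l => by
      rw [← hcoord]
      change inner ℝ (g l) (WithLp.toLp 2 w) = 0
      simpa [EuclideanSpace.inner_eq_star_dotProduct, dotProduct_comm] using hw l
    simpa using congrArg WithLp.ofLp this
  have hhull : convexHull ℝ (Set.range p) = {x | ∀ l, 0 ≤ lam l x} := by
    simpa [hlam, hb] using b.convexHull_eq_nonneg_coord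
  have hinterior : interior (convexHull ℝ (Set.range p)) = {x | ∀ l, 0 < lam l x} := by
    simpa [hlam, hb] using b.interior_convexHull
  have hbK_vecMulVec (x : EuclideanSpace ℝ (Fin 3)) :
      bK x = ∑ l, (∏ m ∈ Finset.univ.erase l, lam m x) • vecMulVec (g l).ofLp (g l).ofLp := hbK x
  refine ⟨fun x hx => ⟨?_, fun w => ?_⟩, fun x hx w hw => ?_⟩
  · exact hbK_vecMulVec x ▸ transpose_sum_smul_vecMulVec_self _ _
  · rw [hhull] at hx
    exact hbK_vecMulVec x ▸ dotProduct_sum_smul_vecMulVec_self_mulVec_nonneg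
      (fun l => Finset.prod_nonneg fun m _ => hx m) _ w
  · rw [hinterior] at hx
    exact hbK_vecMulVec x ▸ dotProduct_sum_smul_vecMulVec_self_mulVec_pos
      (fun l => Finset.prod_pos fun m _ => hx m) (hgrad_sep w) hw

/-- The matrix-valued bubble function on a tetrahedron is positive semidefinite on the
closed tetrahedron and positive definite in its interior. -/
theorem tetrahedron_matrix_bubble_posdef
    (p : Fin 4 → EuclideanSpace ℝ (Fin 3)) (hp : AffineIndependent ℝ p)
    (lam : Fin 4 → EuclideanSpace ℝ (Fin 3) → ℝ)
    (g : Fin 4 → EuclideanSpace ℝ (Fin 3))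
    (hinterp : ∀ l m, lam l (p m) = if l = m then 1 else 0)
    (hsum : ∀ x, ∑ l, lam l x = 1)
    (hgrad : ∀ l x v, lam l (x + v) = lam l x + (inner ℝ (g l) v : ℝ))
    (bK : EuclideanSpace ℝ (Fin 3) → Matrix (Fin 3) (Fin 3) ℝ)
    (hbK : ∀ x, bK x = ∑ l, (∏ m ∈ Finset.univ.erase l, lam m x) •
        Matrix.of (fun i j => g l i * g l j)) :
    (∀ x ∈ convexHull ℝ (Set.range p),
      (bK x)ᵀ = bK x ∧ ∀ w : Fin 3 → ℝ, 0 ≤ w ⬝ᵥ (bK x).mulVec w) ∧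
    (∀ x ∈ interior (convexHull ℝ (Set.range p)),
      ∀ w : Fin 3 → ℝ, w ≠ 0 → 0 < w ⬝ᵥ (bK x).mulVec w) :=
  tetrahedron_matrix_bubble_posdef_general p hp lam g hinterp hgrad bK hbK
end
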